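/- There is no currency A = (1, a_1, a_2, a_3, a_4, a_5, a_6) with the following pattern of orderliness of its prefixes: the prefixes (1), (1, a_1) and (1, a_1, a_2) are orderly, the prefix (1, a_1, a_2, a_3) is not orderly, the prefix (1, a_1, a_2, a_3, a_4) is orderly, the prefix (1, a_1, a_2, a_3, a_4, a_5) is not orderly, and A itself is orderly. -/

import Mathlib

/-- The largest coin of the currency with coins `a 0, …, a k` that is `≤ c`
(or `0` if there is none). -/
def bestCoin (a : ℕ → ℕ) (k : ℕ) (c : ℕ) : ℕ :=
  ((Finset.range (k + 1)).filter fun j => a j ≤ c).sup a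

/-- The number of coins used by the greedy algorithm to pay the amount `c`,
using the currency with coins `a 0, …, a k`. -/
def grd (a : ℕ → ℕ) (k : ℕ) : ℕ → ℕ
  | 0 => 0
  | c + 1 =>
    if h : 1 ≤ bestCoin a k (c + 1) then
      grd a k (c + 1 - bestCoin a k (c + 1)) + 1
    else 0
  decreasing_by omega

/-- The minimal number of coins needed to pay the amount `c`,
using the currency with coins `a 0, …, a k`. -/
noncomputable def opt (a : ℕ → ℕ) (k : ℕ) (c : ℕ) : ℕ :=
  sInf {n | ∃ x : Fin (k + 1) → ℕ, (∑ i, x i) = n ∧ (∑ i, x i * a i.1) = c}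

/-- `a 0, …, a k` is a currency: it starts with the coin `1` and is strictly increasing. -/
def IsCurrency (a : ℕ → ℕ) (k : ℕ) : Prop :=
  a 0 = 1 ∧ ∀ i j : ℕ, i < j → j ≤ k → a i < a j

/-- The currency with coins `a 0, …, a k` is orderly: the greedy payment is
optimal for every positive amount. -/
def Orderly (a : ℕ → ℕ) (k : ℕ) : Prop :=
  ∀ c : ℕ, 0 < c → opt a k c = grd a k c

/-- The set `𝒜(a) = ⋃_{m ≥ 1} {m·a − l : 0 ≤ l ≤ m}`. -/
def calA (a : ℕ) : Set ℕ :=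
  {x | ∃ m l : ℕ, 1 ≤ m ∧ l ≤ m ∧ x = m * a - l}

/-!
Write `A_k = (a 0, …, a k)`. Suppose `A_k` and `A_{k+2}` are orderly but `A_{k+1}` is not, and
let `w` be the smallest counterexample of `A_{k+1}`, with an optimal payment. That payment avoids
`a (k + 1)`, and removing any one of its coins `a i` leaves less than `a (k + 1)`: otherwise, by
minimality, greedy pays `w - a i` optimally starting with `a (k + 1)`, which gives a payment of
`w - a (k + 1)`, hence a greedy payment of `w`, with no more coins than the optimal one. So
`a (k + 2) ≤ w < a (k + 1) + a k` and `grd_k w ≤ grd_k (w - a (k + 1))`. Orderliness of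
`A_{k+2}` at the two-coin amounts `a (k + 1) + a k` and `2 a (k + 1)` makes each of them exceed
`a (k + 2)` by a smaller coin. For `k = 2` the possible pairs of coins leave only
`A_4 = (1, 2, b, b + 1, 2b)` with `b ≥ 4`. For `k = 4` every pair fails, either at another
two-coin amount or because the greedy counts of `A_4` at `w` and `w - a 5` contradict the
inequality above.
-/

variable {a : ℕ → ℕ} {k c n : ℕ}

def HasRepr (a : ℕ → ℕ) (k c n : ℕ) : Prop :=
  ∃ x : Fin (k + 1) → ℕ, ∑ i, x i = n ∧ ∑ i, x i * a i = c

namespace HasRepr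

lemma zero : HasRepr a k 0 0 := ⟨0, by simp, by simp⟩

lemma coin (i : Fin (k + 1)) : HasRepr a k (a i) 1 :=
  ⟨Pi.single i 1, by simp, by simp [Pi.single_apply]⟩

lemma add {c' n' : ℕ} (h : HasRepr a k c n) (h' : HasRepr a k c' n') :
    HasRepr a k (c + c') (n + n') := by
  obtain ⟨x, rfl, rfl⟩ := h
  obtain ⟨y, rfl, rfl⟩ := h'
  exact ⟨x + y, by simp [Finset.sum_add_distrib], by simp [add_mul, Finset.sum_add_distrib]⟩

lemma add_coin {i : ℕ} (h : HasRepr a k c n) (hi : i ≤ k) : HasRepr a k (c + a i) (n + 1) :=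
  h.add (coin ⟨i, by omega⟩)

lemma succ (h : HasRepr a k c n) : HasRepr a (k + 1) c n := by
  obtain ⟨x, rfl, rfl⟩ := h
  exact ⟨Fin.snoc x 0, by simp [Fin.sum_univ_castSucc], by simp [Fin.sum_univ_castSucc]⟩

end HasRepr

lemma hasRepr_of_last_eq_zero {x : Fin (k + 2) → ℕ} (hx : x (Fin.last (k + 1)) = 0)
    (hn : ∑ i, x i = n) (hc : ∑ i, x i * a i = c) : HasRepr a k c n :=
  ⟨fun i => x i.castSucc, by simpa [Fin.sum_univ_castSucc, hx] using hn,
    by simpa [Fin.sum_univ_castSucc, hx] using hc⟩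

lemma exists_hasRepr_of_ne_zero {x : Fin (k + 1) → ℕ} {i : Fin (k + 1)} (hi : x i ≠ 0) :
    ∃ c n, ∑ j, x j * a j = c + a i ∧ ∑ j, x j = n + 1 ∧ HasRepr a k c n := by
  set y := Function.update x i (x i - 1)
  have hxy : x = y + Pi.single i 1 := by
    ext j
    rcases eq_or_ne j i with rfl | hj
    · simp only [y, Pi.add_apply, Function.update_self, Pi.single_eq_same]
      omega
    · simp [y, hj]
  refine ⟨∑ j, y j * a j, ∑ j, y j, ?_, ?_, y, rfl, rfl⟩ <;>
    rw [hxy] <;> simp [add_mul, Finset.sum_add_distrib, Pi.single_apply]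

lemma opt_le (h : HasRepr a k c n) : opt a k c ≤ n := Nat.sInf_le h

lemma Orderly.grd_le (h : Orderly a k) (hc : 0 < c) (hr : HasRepr a k c n) : grd a k c ≤ n :=
  h c hc ▸ opt_le hr

namespace IsCurrency

lemma mono {K : ℕ} (ha : IsCurrency a K) (hk : k ≤ K) : IsCurrency a k :=
  ⟨ha.1, fun i j hij hj => ha.2 i j hij (hj.trans hk)⟩

lemma strictMonoOn (ha : IsCurrency a k) : StrictMonoOn a (Set.Iic k) :=
  fun i _ j hj hij => ha.2 i j hij hj

lemma apply_le_apply (ha : IsCurrency a k) {i j : ℕ} (hj : j ≤ k) (hij : i ≤ j) :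
    a i ≤ a j :=
  ha.strictMonoOn.monotoneOn (Set.mem_Iic.2 (hij.trans hj)) hj hij

lemma lt_of_apply_lt (ha : IsCurrency a k) {i j : ℕ} (hi : i ≤ k) (hj : j ≤ k)
    (h : a i < a j) : i < j :=
  (ha.strictMonoOn.lt_iff_lt hi hj).1 h

lemma one_le (ha : IsCurrency a k) {j : ℕ} (hj : j ≤ k) : 1 ≤ a j := by
  rcases Nat.eq_zero_or_pos j with rfl | hj0
  · exact ha.1.ge
  · exact ha.1 ▸ (ha.2 0 j hj0 hj).le

end IsCurrency

lemma exists_bestCoin_eq (h0 : a 0 = 1) (hc : 0 < c) :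
    ∃ j ≤ k, bestCoin a k c = a j ∧ a j ≤ c := by
  have hmem : 0 ∈ (Finset.range (k + 1)).filter fun j => a j ≤ c :=
    Finset.mem_filter.2 ⟨Finset.mem_range.2 k.succ_pos, by omega⟩
  obtain ⟨j, hj, hsup⟩ := Finset.exists_mem_eq_sup _ ⟨0, hmem⟩ a
  simp only [Finset.mem_filter, Finset.mem_range] at hj
  exact ⟨j, by omega, hsup, hj.2⟩

lemma one_le_bestCoin (h0 : a 0 = 1) (hc : 0 < c) : 1 ≤ bestCoin a k c :=
  h0 ▸ Finset.le_sup (f := a) (Finset.mem_filter.2 ⟨Finset.mem_range.2 k.succ_pos, by omega⟩)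

lemma bestCoin_eq (ha : IsCurrency a k) {j : ℕ} (hj : j ≤ k) (hle : a j ≤ c)
    (hlt : j < k → c < a (j + 1)) : bestCoin a k c = a j := by
  refine le_antisymm (Finset.sup_le fun i hi => ?_) 
    (Finset.le_sup (Finset.mem_filter.2 ⟨Finset.mem_range.2 (by omega), hle⟩))
  simp only [Finset.mem_filter, Finset.mem_range] at hi
  refine ha.apply_le_apply hj (not_lt.1 fun hji => ?_)
  have := ha.apply_le_apply (by omega) (show j + 1 ≤ i by omega)
  have := hlt (by omega)
  omega

lemma grd_eq_of_pos (h0 : a 0 = 1) (hc : 0 < c) :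
    grd a k c = grd a k (c - bestCoin a k c) + 1 := by
  obtain ⟨c, rfl⟩ : ∃ c', c = c' + 1 := ⟨c - 1, by omega⟩
  rw [grd, dif_pos (one_le_bestCoin h0 hc)]

lemma grd_pos (h0 : a 0 = 1) (hc : 0 < c) : 0 < grd a k c := by
  rw [grd_eq_of_pos h0 hc]; omega

lemma grd_eq_grd_sub_add_one (ha : IsCurrency a k) {j : ℕ} (hj : j ≤ k) (hle : a j ≤ c)
    (hlt : j < k → c < a (j + 1)) : grd a k c = grd a k (c - a j) + 1 := by
  rw [grd_eq_of_pos ha.1 ((ha.one_le hj).trans hle), bestCoin_eq ha hj hle hlt]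

lemma grd_add_top (ha : IsCurrency a k) (c : ℕ) : grd a k (c + a k) = grd a k c + 1 := by
  rw [grd_eq_grd_sub_add_one ha le_rfl (by omega) (by omega), Nat.add_sub_cancel]

lemma grd_succ_of_lt (hc : c < a (k + 1)) : grd a (k + 1) c = grd a k c := by
  induction c using Nat.strong_induction_on with
  | _ c ih =>
    have hbest : bestCoin a (k + 1) c = bestCoin a k c := by
      rw [bestCoin, Finset.range_add_one, Finset.filter_insert, if_neg (by omega), bestCoin]
    rcases c with _ | c
    · simp [grd]
    · rw [grd, grd, hbest]
      split_ifs with h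
      · rw [ih _ (by omega) (by omega)]
      · rfl

lemma grd_eq_grd_of_lt (ha : IsCurrency a k) {j : ℕ} (hj : j < k) (hc : c < a (j + 1)) :
    grd a k c = grd a j c := by
  induction k, hj using Nat.le_induction with
  | base => exact grd_succ_of_lt hc
  | succ k hjk ih =>
    rw [grd_succ_of_lt (hc.trans_le ?_), ih (ha.mono k.le_succ)]
    exact ha.apply_le_apply le_rfl (by omega)

lemma grd_index_zero (h0 : a 0 = 1) (c : ℕ) : grd a 0 c = c := by
  induction c with
  | zero => simp [grd]
  | succ c ih => rw [← h0, grd_add_top ⟨h0, by omega⟩, h0, ih]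

lemma grd_hasRepr (h0 : a 0 = 1) (c : ℕ) : HasRepr a k c (grd a k c) := by
  induction c using Nat.strong_induction_on with
  | _ c ih =>
    rcases Nat.eq_zero_or_pos c with rfl | hc
    · simpa [grd] using HasRepr.zero
    obtain ⟨j, hj, hbest, hjc⟩ := exists_bestCoin_eq (k := k) h0 hc
    have hj1 : 1 ≤ a j := hbest ▸ one_le_bestCoin h0 hc
    rw [grd_eq_of_pos h0 hc, hbest]
    simpa [Nat.sub_add_cancel hjc] using (ih (c - a j) (by omega)).add_coin hj

lemma exists_coin_eq_of_grd_le_one (h0 : a 0 = 1) (hc : 0 < c) (h : grd a k c ≤ 1) :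
    ∃ j ≤ k, a j = c := by
  obtain ⟨j, hj, hbest, hjc⟩ := exists_bestCoin_eq (k := k) h0 hc
  rw [grd_eq_of_pos h0 hc, hbest] at h
  refine ⟨j, hj, ?_⟩
  by_contra hne
  have := grd_pos (k := k) h0 (c := c - a j) (by omega)
  omega

lemma grd_add_mul_top (ha : IsCurrency a k) (c q : ℕ) :
    grd a k (c + q * a k) = grd a k c + q := by
  induction q with
  | zero => simp
  | succ q ih => rw [add_one_mul, ← add_assoc, grd_add_top ha, ih, add_assoc]

lemma grd_two_eq (ha : IsCurrency a 2) {r q t : ℕ} (hr : r < a 1) (hq : r + q * a 1 < a 2)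
    (hc : c = r + q * a 1 + t * a 2) : grd a 2 c = r + q + t := by
  have ha1 : IsCurrency a 1 := ha.mono one_le_two
  rw [hc, grd_add_mul_top ha, grd_eq_grd_of_lt ha one_lt_two hq, grd_add_mul_top ha1,
    grd_eq_grd_of_lt ha1 zero_lt_one hr, grd_index_zero ha.1]

lemma Orderly.grd_add_one_le (h : Orderly a k) (h0 : a 0 = 1) (c : ℕ) :
    grd a k (c + 1) ≤ grd a k c + 1 :=
  h.grd_le (by omega) (by simpa [h0] using (grd_hasRepr h0 c).add_coin (i := 0) (by omega))

lemma Orderly.exists_coin_add_eq (ha : IsCurrency a k) (h : Orderly a k) {i j m : ℕ}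
    (hi : i ≤ k) (hj : j ≤ k) (hm : m ≤ k) (hlt : a m < a i + a j)
    (hnext : m < k → a i + a j < a (m + 1)) : ∃ l ≤ k, a l + a m = a i + a j := by
  have h2 : grd a k (a i + a j) ≤ 2 :=
    h.grd_le (by omega) ((HasRepr.coin ⟨i, by omega⟩).add_coin hj)
  rw [grd_eq_grd_sub_add_one ha hm hlt.le hnext] at h2
  obtain ⟨l, hl, hal⟩ := exists_coin_eq_of_grd_le_one ha.1 (by omega)
    (show grd a k (a i + a j - a m) ≤ 1 by omega)
  exact ⟨l, hl, by omega⟩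

lemma exists_minimal_counterexample (h0 : a 0 = 1) (h : ¬ Orderly a k) :
    ∃ w, 0 < w ∧ (∃ n, HasRepr a k w n ∧ n < grd a k w) ∧
      ∀ c, 0 < c → c < w → ∀ n, HasRepr a k c n → grd a k c ≤ n := by
  have hex : ∃ w, 0 < w ∧ ∃ n, HasRepr a k w n ∧ n < grd a k w := by
    simp only [Orderly, not_forall] at h
    obtain ⟨w, hw, hne⟩ := h
    have hmem : opt a k w ∈ {n | HasRepr a k w n} := Nat.sInf_mem ⟨_, grd_hasRepr h0 w⟩
    exact ⟨w, hw, opt a k w, hmem, lt_of_le_of_ne (opt_le (grd_hasRepr h0 w)) hne⟩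
  classical
  refine ⟨Nat.find hex, (Nat.find_spec hex).1, (Nat.find_spec hex).2, fun c hc hcw n hn => ?_⟩
  by_contra! hlt
  exact Nat.find_min hex hcw ⟨hc, n, hn, hlt⟩

lemma grd_le_of_hasRepr_sub_top (ha : IsCurrency a k) {w : ℕ}
    (hmin : ∀ c, 0 < c → c < w → ∀ n, HasRepr a k c n → grd a k c ≤ n)
    (hw : a k ≤ w) (hr : HasRepr a k (w - a k) n) : grd a k w ≤ n + 1 := by
  obtain ⟨c, rfl⟩ : ∃ c, w = c + a k := ⟨w - a k, by omega⟩
  rw [Nat.add_sub_cancel] at hr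
  rw [grd_add_top ha]
  rcases Nat.eq_zero_or_pos c with rfl | hc
  · simp [grd]
  · have := hmin c hc (by have := ha.one_le le_rfl; omega) n hr
    omega

lemma last_eq_zero_and_lt_add_of_minimal {m : ℕ} (ha : IsCurrency a m) {w : ℕ}
    (hmin : ∀ c, 0 < c → c < w → ∀ n, HasRepr a m c n → grd a m c ≤ n)
    (hw : a m ≤ w) {x : Fin (m + 1) → ℕ} (hxw : ∑ i, x i * a i = w)
    (hxn : ∑ i, x i < grd a m w) :
    x (Fin.last m) = 0 ∧ ∀ i, x i ≠ 0 → w < a i + a m := by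
  have hsub : ∀ n, HasRepr a m (w - a m) n → ∑ i, x i ≤ n := fun n hr => by
    have := grd_le_of_hasRepr_sub_top ha hmin hw hr
    omega
  constructor
  · by_contra hlast
    obtain ⟨c, n, hc, hn, hr⟩ := exists_hasRepr_of_ne_zero (a := a) hlast
    rw [Fin.val_last] at hc
    have := hsub n (by rwa [← hxw, hc, Nat.add_sub_cancel])
    omega
  · intro i hi
    by_contra! hwi
    obtain ⟨c, n, hc, hn, hr⟩ := exists_hasRepr_of_ne_zero (a := a) hi
    have hai := ha.one_le (Nat.lt_succ_iff.1 i.is_lt)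
    have ham := ha.one_le le_rfl
    have hgc := hmin c (by omega) (by omega) n hr
    rw [grd_eq_grd_sub_add_one ha le_rfl (by omega) (by omega)] at hgc
    have hrepr := (grd_hasRepr ha.1 (c - a m)).add_coin (Nat.lt_succ_iff.1 i.is_lt)
    have := hsub _ (by rwa [show c - a m + a i = w - a m by omega] at hrepr)
    omega

theorem exists_grd_le_grd_sub_of_not_orderly (ha : IsCurrency a (k + 2)) (hk : Orderly a k)
    (hk1 : ¬ Orderly a (k + 1)) (hk2 : Orderly a (k + 2)) :
    ∃ w, a (k + 2) ≤ w ∧ w < a (k + 1) + a k ∧ grd a k w ≤ grd a k (w - a (k + 1)) := by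
  have ha1 : IsCurrency a (k + 1) := ha.mono (by omega)
  have hk_lt := ha.2 k (k + 1) (by omega) (by omega)
  have hk1_lt := ha.2 (k + 1) (k + 2) (by omega) le_rfl
  obtain ⟨w, hw, ⟨n, ⟨x, hxn', hxw⟩, hxn⟩, hmin⟩ :=
    exists_minimal_counterexample ha.1 hk1
  have hwk2 : a (k + 2) ≤ w := by
    by_contra! hlt
    have := hk2.grd_le hw (HasRepr.succ ⟨x, hxn', hxw⟩)
    rw [grd_succ_of_lt hlt] at this
    omega
  obtain ⟨hlast, hcoins⟩ :=
    last_eq_zero_and_lt_add_of_minimal ha1 hmin (by omega) hxw (hxn' ▸ hxn)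
  have hwk : w < a (k + 1) + a k := by
    obtain ⟨i, hi⟩ : ∃ i, x i ≠ 0 := by
      by_contra! h
      simp only [h, zero_mul, Finset.sum_const_zero] at hxw
      omega
    have hik : (i : ℕ) ≤ k := by
      have := i.is_lt
      by_contra! hik
      exact hi (by rwa [show i = Fin.last (k + 1) from Fin.ext (by rw [Fin.val_last]; omega)])
    have := ha.apply_le_apply (by omega) hik
    have := hcoins i hi
    omega
  refine ⟨w, hwk2, hwk, ?_⟩
  have hgk := hk.grd_le hw (hasRepr_of_last_eq_zero hlast hxn' hxw)
  rw [grd_eq_grd_sub_add_one ha1 le_rfl (by omega) (by omega), grd_succ_of_lt (by omega)] at hxn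
  omega

lemma shape_of_coin_three_add_one_eq (ha : IsCurrency a 4) (h4 : Orderly a 4)
    (hd : a 3 + 1 = a 2 + a 1) (he : a 4 + 2 = 2 * a 2 + a 1) {w : ℕ} (hew : a 4 ≤ w)
    (hwd : w < a 3 + a 2) (hgrd : grd a 2 w ≤ grd a 2 (w - a 3)) : a 1 = 2 ∧ 4 ≤ a 2 := by
  have ha2 : IsCurrency a 2 := ha.mono (by norm_num)
  have h0 := ha.1
  have hp := ha.2 0 1 (by norm_num) (by norm_num)
  have hpb := ha.2 1 2 (by norm_num) (by norm_num)
  have hw : grd a 2 w = a 1 := by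
    rw [grd_two_eq ha2 (r := a 1 - 2) (q := 0) (t := 2) (by omega) (by omega) (by omega)]
    omega
  rcases Nat.lt_or_ge (a 1) 3 with hp2 | hp3
  · refine ⟨by omega, ?_⟩
    by_contra! hb
    have := grd_two_eq ha2 (c := w - a 3) (r := 0) (q := 1) (t := 0) (by omega) (by omega)
      (by omega)
    omega
  · exfalso
    obtain ⟨l, hl, hal⟩ := h4.exists_coin_add_eq ha (i := 2) (j := 2) (m := 3) (by norm_num)
      (by norm_num) (by norm_num) (by omega) (fun _ => by simpa using (by omega : a 2 + a 2 < a 4))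
    have hl2 : l < 2 := ha.lt_of_apply_lt hl (by norm_num) (by omega)
    interval_cases l
    · omega
    · have := grd_two_eq ha2 (c := w - a 3) (r := a 1 - 2) (q := 1) (t := 0) (by omega)
        (by omega) (by omega)
      omega

lemma false_of_coin_three_add_one_eq_two_mul (ha : IsCurrency a 4) (h2 : Orderly a 2)
    (hd : a 3 + 1 = 2 * a 2) (he : a 4 + 2 = 3 * a 2) {w : ℕ} (hew : a 4 ≤ w)
    (hwd : w < a 3 + a 2) (hgrd : grd a 2 w ≤ grd a 2 (w - a 3)) : False := by
  have ha2 : IsCurrency a 2 := ha.mono (by norm_num)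
  have hp := ha.2 0 1 (by norm_num) (by norm_num)
  have hpb := ha.2 1 2 (by norm_num) (by norm_num)
  have hw : grd a 2 w = grd a 2 (a 2 - 2) + 2 := by
    rw [show w = a 2 - 2 + 2 * a 2 by omega, grd_add_mul_top ha2]
  have hwd : grd a 2 (w - a 3) ≤ grd a 2 (a 2 - 2) + 1 := by
    rw [show w - a 3 = a 2 - 2 + 1 by omega]
    exact h2.grd_add_one_le ha.1 _
  omega

lemma false_of_coin_three_add_coin_one_eq_two_mul (ha : IsCurrency a 4) (h2 : Orderly a 2)
    (hd : a 3 + a 1 = 2 * a 2) (he : a 4 + 2 * a 1 = 3 * a 2) {w : ℕ} (hew : a 4 ≤ w)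
    (hwd : w < a 3 + a 2) (hgrd : grd a 2 w ≤ grd a 2 (w - a 3)) : False := by
  have ha2 : IsCurrency a 2 := ha.mono (by norm_num)
  have h0 := ha.1
  have hp := ha.2 0 1 (by norm_num) (by norm_num)
  have hpb := ha.2 1 2 (by norm_num) (by norm_num)
  rcases Nat.lt_or_ge w (2 * a 2) with hw | hw
  · obtain ⟨l, hl, hal⟩ := h2.exists_coin_add_eq ha2 (i := 1) (j := 1) (m := 2) (by norm_num)
      (by norm_num) le_rfl (by omega) (fun h => absurd h (lt_irrefl _))
    have hl1 : l < 1 := ha2.lt_of_apply_lt hl (by norm_num) (by omega)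
    interval_cases l
    have := grd_two_eq ha2 (c := w) (r := a 1 - 2) (q := 1) (t := 1) (by omega) (by omega)
      (by omega)
    have := grd_two_eq ha2 (c := w - a 3) (r := a 1 - 1) (q := 0) (t := 0) (by omega)
      (by omega) (by omega)
    omega
  · have ha1 : IsCurrency a 1 := ha.mono (by norm_num)
    have hw : grd a 2 w = grd a 1 (w - 2 * a 2) + 2 := by
      rw [show w = w - 2 * a 2 + 2 * a 2 by omega, grd_add_mul_top ha2, Nat.add_sub_cancel,
        grd_eq_grd_of_lt ha2 one_lt_two (by simp only [Nat.reduceAdd]; omega)]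
    have hwd : grd a 2 (w - a 3) = grd a 1 (w - 2 * a 2) + 1 := by
      rw [grd_eq_grd_of_lt ha2 one_lt_two (by simp only [Nat.reduceAdd]; omega),
        show w - a 3 = w - 2 * a 2 + 1 * a 1 by omega, grd_add_mul_top ha1]
    omega

theorem shape_of_orderly_not_orderly_orderly (ha : IsCurrency a 4) (h2 : Orderly a 2)
    (h3 : ¬ Orderly a 3) (h4 : Orderly a 4) :
    a 1 = 2 ∧ a 3 = a 2 + 1 ∧ a 4 = 2 * a 2 ∧ 4 ≤ a 2 := by
  obtain ⟨w, hew, hwd, hgrd⟩ := exists_grd_le_grd_sub_of_not_orderly ha h2 h3 h4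
  simp only [Nat.reduceAdd] at hew hwd hgrd
  have h0 := ha.1
  have hp := ha.2 0 1 (by norm_num) (by norm_num)
  have hpb := ha.2 1 2 (by norm_num) (by norm_num)
  have hbd := ha.2 2 3 (by norm_num) (by norm_num)
  have hde := ha.2 3 4 (by norm_num) (by norm_num)
  obtain ⟨l, hl, hr⟩ := h4.exists_coin_add_eq ha (i := 3) (j := 2) (m := 4) (by norm_num)
    (by norm_num) le_rfl (by omega) (fun h => absurd h (lt_irrefl _))
  obtain ⟨l', hl', hs⟩ := h4.exists_coin_add_eq ha (i := 3) (j := 3) (m := 4) (by norm_num)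
    (by norm_num) le_rfl (by omega) (fun h => absurd h (lt_irrefl _))
  have hl2 : l < 2 := ha.lt_of_apply_lt hl (by norm_num) (by omega)
  have hl'3 : l' < 3 := ha.lt_of_apply_lt hl' (by norm_num) (by omega)
  interval_cases l <;> interval_cases l'
  · omega
  · have := shape_of_coin_three_add_one_eq ha h4 (by omega) (by omega) hew hwd hgrd
    omega
  · exact (false_of_coin_three_add_one_eq_two_mul ha h2 (by omega) (by omega) hew hwd hgrd).elim
  · omega
  · omega
  · exact (false_of_coin_three_add_coin_one_eq_two_mul ha h2 (by omega) (by omega) hew hwd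
      hgrd).elim

lemma grd_four_eq (ha : IsCurrency a 4) (ha1 : a 1 = 2) (ha3 : a 3 = a 2 + 1)
    (ha4 : a 4 = 2 * a 2) (hc : c < a 4) :
    grd a 4 c = if c < a 2 then c / 2 + c % 2 else if c = a 2 then 1 else
      (c - a 3) / 2 + (c - a 3) % 2 + 1 := by
  have ha2 : IsCurrency a 2 := ha.mono (by norm_num)
  have ha3' : IsCurrency a 3 := ha.mono (by norm_num)
  have hpb := ha.2 1 2 (by norm_num) (by norm_num)
  have hG2 : ∀ x < a 2, grd a 2 x = x / 2 + x % 2 := fun x hx => by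
    rw [grd_two_eq ha2 (r := x % 2) (q := x / 2) (t := 0) (by omega) (by rw [ha1]; omega)
      (by rw [ha1]; omega)]
    omega
  rw [grd_eq_grd_of_lt ha (j := 3) (by norm_num) hc]
  split_ifs with hb hb'
  · rw [grd_eq_grd_of_lt ha3' (j := 2) (by norm_num) (by simp only [Nat.reduceAdd]; omega),
      hG2 c hb]
  · rw [grd_eq_grd_of_lt ha3' (j := 2) (by norm_num) (by simp only [Nat.reduceAdd]; omega),
      grd_two_eq ha2 (r := 0) (q := 0) (t := 1) (by omega) (by omega) (by omega)]
  · rw [grd_eq_grd_sub_add_one ha3' le_rfl (by omega) (by omega),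
      grd_eq_grd_of_lt ha3' (j := 2) (by norm_num) (by simp only [Nat.reduceAdd]; omega),
      hG2 _ (by omega)]

lemma add_eq_of_orderly_six (ha : IsCurrency a 6) (ha1 : a 1 = 2) (ha3 : a 3 = a 2 + 1)
    (ha4 : a 4 = 2 * a 2) (h6 : Orderly a 6) {i j m : ℕ} (hi : i ≤ 6) (hj : j ≤ 6)
    (hm : m ≤ 6) (hlt : a m < a i + a j) (hnext : m < 6 → a i + a j < a (m + 1))
    (hsmall : a i + a j < a m + a 5) :
    a i + a j = a m + 1 ∨ a i + a j = a m + 2 ∨ a i + a j = a m + a 2 ∨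
      a i + a j = a m + a 2 + 1 ∨ a i + a j = a m + 2 * a 2 := by
  obtain ⟨l, hl, hal⟩ := h6.exists_coin_add_eq ha hi hj hm hlt hnext
  have hl4 : l < 5 := ha.lt_of_apply_lt hl (by norm_num) (by omega)
  have h0 := ha.1
  interval_cases l <;> omega

theorem orderly_five_of_orderly_four_of_orderly_six (ha : IsCurrency a 6) (ha1 : a 1 = 2)
    (ha3 : a 3 = a 2 + 1) (ha4 : a 4 = 2 * a 2) (hb : 4 ≤ a 2) (h4 : Orderly a 4)
    (h6 : Orderly a 6) : Orderly a 5 := by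
  by_contra h5
  obtain ⟨w, hgw, hwf, hgrd⟩ := exists_grd_le_grd_sub_of_not_orderly ha h4 h5 h6
  simp only [Nat.reduceAdd] at hgw hwf hgrd
  have ha4' : IsCurrency a 4 := ha.mono (by norm_num)
  have hef := ha.2 4 5 (by norm_num) (by norm_num)
  have hfg := ha.2 5 6 (by norm_num) (by norm_num)
  have hr := add_eq_of_orderly_six ha ha1 ha3 ha4 h6 (i := 5) (j := 4) (m := 6) (by norm_num)
    (by norm_num) le_rfl (by omega) (fun h => absurd h (lt_irrefl _)) (by omega)
  have hs := add_eq_of_orderly_six ha ha1 ha3 ha4 h6 (i := 5) (j := 5) (m := 6) (by norm_num)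
    (by norm_num) le_rfl (by omega) (fun h => absurd h (lt_irrefl _)) (by omega)
  have hf₁ : a 5 = 2 * a 2 + 1 → a 6 ≤ 3 * a 2 := fun hf => by
    by_contra! hg
    have := add_eq_of_orderly_six ha ha1 ha3 ha4 h6 (i := 4) (j := 2) (m := 5) (by norm_num)
      (by norm_num) (by norm_num) (by omega)
      (fun _ => by simpa using (by omega : a 4 + a 2 < a 6)) (by omega)
    omega
  have hf₂ : a 5 + 2 = 3 * a 2 → a 6 ≤ 3 * a 2 + 1 := fun hf => by
    by_contra! hg
    have := add_eq_of_orderly_six ha ha1 ha3 ha4 h6 (i := 4) (j := 3) (m := 5) (by norm_num)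
      (by norm_num) (by norm_num) (by omega)
      (fun _ => by simpa using (by omega : a 4 + a 3 < a 6)) (by omega)
    omega
  have hG := fun x (hx : x < a 4) => grd_four_eq ha4' ha1 ha3 ha4 hx
  rw [grd_eq_grd_sub_add_one ha4' le_rfl (by omega) (by omega), hG (w - a 5) (by omega)] at hgrd
  rcases Nat.lt_or_ge w (2 * a 4) with hw4 | hw4
  · rw [hG _ (by omega)] at hgrd
    split_ifs at hgrd <;> omega
  · rw [grd_eq_grd_sub_add_one ha4' le_rfl (by omega) (by omega), hG _ (by omega)] at hgrd
    split_ifs at hgrd <;> omega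

/-- There is no currency `(1, a 1, …, a 6)` whose pattern of orderliness of
prefixes is `+++-+-+`. -/
theorem empty_pattern_class :
    ¬ ∃ a : ℕ → ℕ, IsCurrency a 6 ∧
      Orderly a 0 ∧ Orderly a 1 ∧ Orderly a 2 ∧ ¬ Orderly a 3 ∧
      Orderly a 4 ∧ ¬ Orderly a 5 ∧ Orderly a 6 := by
  rintro ⟨a, ha, -, -, h2, h3, h4, h5, h6⟩
  obtain ⟨ha1, ha3, ha4, hb⟩ :=
    shape_of_orderly_not_orderly_orderly (ha.mono (by norm_num)) h2 h3 h4
  exact h5 (orderly_five_of_orderly_four_of_orderly_six ha ha1 ha3 ha4 hb h4 h6)
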